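/- Let p : E ⥤ B be a functor which is an isofibration. If p admits a left adjoint L : B ⥤ E together with an adjunction L ⊣ p whose unit 𝟭_B ⟶ L ⋙ p is a natural isomorphism, then p admits a left adjoint L' : B ⥤ E with L' ⋙ p = 𝟭_B and an adjunction L' ⊣ p whose unit is the identity natural transformation. -/

import Mathlib

/-!
Lifting the inverse of each unit component `η_b : b ⟶ p (L b)` along the isofibration `p` gives
objects `L' b` over `b` and isomorphisms `L b ≅ L' b`; these assemble into a functor `L'` with
`L' ⋙ p = 𝟭 B` and a natural isomorphism `L ≅ L'`. Transporting the adjunction along it changes the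
unit to `η ≫ p α`, which is `η ≫ η⁻¹ = 𝟙` up to the equality `L' ⋙ p = 𝟭 B`.
-/

open CategoryTheory

universe v₁ v₂ u₁ u₂

/-- A functor is an isofibration if every isomorphism whose domain is in the image
can be lifted. -/
def Isofibration {A : Type u₁} [Category.{v₁} A] {B : Type u₂} [Category.{v₂} B]
    (F : A ⥤ B) : Prop :=
  ∀ (a : A) (b : B) (β : F.obj a ≅ b),
    ∃ (a' : A) (α : a ≅ a') (h : F.obj a' = b), F.mapIso α ≪≫ eqToIso h = β

namespace CategoryTheory.Isofibration

variable {A : Type u₁} [Category.{v₁} A] {B : Type u₂} [Category.{v₂} B] {F : A ⥤ B}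

theorem exists_lift_of_iso {C : Type*} [Category C] (hF : Isofibration F) {G : C ⥤ A}
    {H : C ⥤ B} (e : G ⋙ F ≅ H) :
    ∃ (G' : C ⥤ A) (α : G ≅ G') (h : G' ⋙ F = H),
      Functor.isoWhiskerRight α F ≪≫ eqToIso h = e := by
  choose obj α hobj hα using fun c => hF (G.obj c) (H.obj c) (e.app c)
  have hα_hom c : F.map (α c).hom ≫ eqToHom (hobj c) = e.hom.app c := congrArg Iso.hom (hα c)
  have h : G.copyObj obj α ⋙ F = H :=
    Functor.ext_of_iso (Functor.isoWhiskerRight (G.isoCopyObj obj α).symm F ≪≫ e) hobj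
      fun c => by
        show F.map (α c).inv ≫ e.hom.app c = _
        rw [← hα_hom]
        exact (F.mapIso (α c)).inv_hom_id_assoc _
  refine ⟨_, G.isoCopyObj obj α, h, ?_⟩
  ext c
  simp only [Iso.trans_hom, NatTrans.comp_app, eqToIso.hom, eqToHom_app]
  exact hα_hom c

end CategoryTheory.Isofibration

/-- An isofibration admitting a left adjoint with invertible unit admits a left adjoint
which is a strict section, with identity unit. -/
theorem isofibration_left_adjoint_normalization
    {E : Type u₁} [Category.{v₁} E] {B : Type u₂} [Category.{v₂} B]
    (p : E ⥤ B) (hp : Isofibration p)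
    (L : B ⥤ E) (adj : L ⊣ p) (hunit : IsIso adj.unit) :
    ∃ (L' : B ⥤ E) (adj' : L' ⊣ p) (h : L' ⋙ p = 𝟭 B),
      adj'.unit = eqToHom h.symm := by
  obtain ⟨L', α, h, hα⟩ := hp.exists_lift_of_iso (asIso adj.unit).symm
  refine ⟨L', adj.ofNatIsoLeft α, h, ?_⟩
  have hα_hom : Functor.whiskerRight α.hom p ≫ eqToHom h = inv adj.unit := congrArg Iso.hom hα
  rw [Adjunction.ofNatIsoLeft_unit, ← cancel_mono (eqToHom h), Category.assoc, hα_hom]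
  simp
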